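/- The operation (f # g)(c) = f(c₂)_ψ g((c₁)^ψ) makes Hom_k(C,A) into an associative unital k-algebra #(C,A) with unit the map c ↦ ε(c)1_A; the map i : A → #(C,A), i(a)(c) = ε(c)a, is a ring homomorphism; and for all a ∈ A, f ∈ Hom_k(C,A), c ∈ C: (i(a) # f)(c) = a_ψ f(c^ψ) and (f # i(a))(c) = f(c)·a. -/
import Mathlib


open TensorProduct

noncomputable section

variable {k A C : Type*} [CommRing k] [Ring A] [Algebra k A]
  [AddCommGroup C] [Module k C] [Coalgebra k C]

/-- An entwining structure `(A, C, ψ)`. -/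
structure IsEntwining (k : Type*) {A C : Type*} [CommRing k] [Ring A] [Algebra k A]
    [AddCommGroup C] [Module k C] [Coalgebra k C]
    (ψ : C ⊗[k] A →ₗ[k] A ⊗[k] C) : Prop where
  mul_compat : ψ ∘ₗ LinearMap.lTensor C (LinearMap.mul' k A) =
    LinearMap.rTensor C (LinearMap.mul' k A) ∘ₗ (TensorProduct.assoc k A A C).symm.toLinearMap ∘ₗ
      LinearMap.lTensor A ψ ∘ₗ (TensorProduct.assoc k A C A).toLinearMap ∘ₗ
      LinearMap.rTensor A ψ ∘ₗ (TensorProduct.assoc k C A A).symm.toLinearMap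
  one_compat : ∀ c : C, ψ (c ⊗ₜ[k] 1) = 1 ⊗ₜ[k] c
  comul_compat : LinearMap.lTensor A Coalgebra.comul ∘ₗ ψ =
    (TensorProduct.assoc k A C C).toLinearMap ∘ₗ LinearMap.rTensor C ψ ∘ₗ
      (TensorProduct.assoc k C A C).symm.toLinearMap ∘ₗ LinearMap.lTensor C ψ ∘ₗ
      (TensorProduct.assoc k C C A).toLinearMap ∘ₗ LinearMap.rTensor A Coalgebra.comul
  counit_compat : ∀ (c : C) (a : A),
    TensorProduct.rid k A (LinearMap.lTensor A Coalgebra.counit (ψ (c ⊗ₜ[k] a))) =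
      (Coalgebra.counit (R := k) c) • a

/-- The smash product multiplication on `Hom_k(C,A)`: `(f # g)(c) = f(c₂)_ψ g((c₁)^ψ)`. -/
def smashMul (ψ : C ⊗[k] A →ₗ[k] A ⊗[k] C) (f g : C →ₗ[k] A) : C →ₗ[k] A :=
  LinearMap.mul' k A ∘ₗ LinearMap.lTensor A g ∘ₗ ψ ∘ₗ LinearMap.lTensor C f ∘ₗ Coalgebra.comul

/-- The unit of `#(C,A)`: `c ↦ ε(c) 1_A`. -/
def smashOne (k : Type*) (A C : Type*) [CommRing k] [Ring A] [Algebra k A]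
    [AddCommGroup C] [Module k C] [Coalgebra k C] : C →ₗ[k] A :=
  Algebra.linearMap k A ∘ₗ Coalgebra.counit

/-- The ring morphism `i : A → #(C,A)`, `i(a)(c) = ε(c) a`. -/
def smashIota (k : Type*) {A : Type*} (C : Type*) [CommRing k] [Ring A] [Algebra k A]
    [AddCommGroup C] [Module k C] [Coalgebra k C] (a : A) : C →ₗ[k] A :=
  (Coalgebra.counit : C →ₗ[k] k).smulRight a

set_option linter.unusedSectionVars false in
lemma aux_iota_eq (a : A) : smashIota k C a =
    LinearMap.toSpanSingleton k A a ∘ₗ (Coalgebra.counit : C →ₗ[k] k) := by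
  ext c; simp [smashIota, LinearMap.toSpanSingleton]

lemma aux_iota_comul (a : A) (c : C) :
    LinearMap.lTensor C (smashIota k C a) (Coalgebra.comul (R := k) c) = c ⊗ₜ[k] a := by
  rw [aux_iota_eq, LinearMap.lTensor_comp, LinearMap.comp_apply,
    Coalgebra.lTensor_counit_comul]
  simp [LinearMap.toSpanSingleton]

set_option linter.unusedSectionVars false in
lemma aux_rid_mul (a : A) (w : A ⊗[k] k) :
    LinearMap.mul' k A (LinearMap.lTensor A (LinearMap.toSpanSingleton k A a) w) =
      TensorProduct.rid k A w * a := by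
  have : (LinearMap.mul' k A ∘ₗ LinearMap.lTensor A (LinearMap.toSpanSingleton k A a)) =
      (LinearMap.mulRight k a) ∘ₗ (TensorProduct.rid k A).toLinearMap :=
    TensorProduct.ext' fun x r => by
      simp [LinearMap.toSpanSingleton, mul_smul_comm, smul_mul_assoc]
  simpa using LinearMap.congr_fun this w

lemma aux_counit_map (ψ : C ⊗[k] A →ₗ[k] A ⊗[k] C) (hψ : IsEntwining k ψ) :
    (TensorProduct.rid k A).toLinearMap ∘ₗ LinearMap.lTensor A Coalgebra.counit ∘ₗ ψ =
      (TensorProduct.lid k A).toLinearMap ∘ₗ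
        LinearMap.rTensor A (Coalgebra.counit : C →ₗ[k] k) :=
  TensorProduct.ext' fun c a => by simpa using hψ.counit_compat c a

/-- `(i(a) # f)(c) = a_ψ f(c^ψ)`. -/
lemma aux11 (ψ : C ⊗[k] A →ₗ[k] A ⊗[k] C) (a : A) (f : C →ₗ[k] A) (c : C) :
    smashMul ψ (smashIota k C a) f c =
      LinearMap.mul' k A (LinearMap.lTensor A f (ψ (c ⊗ₜ[k] a))) := by
  simp only [smashMul, LinearMap.comp_apply, aux_iota_comul]

/-- `(f # i(a))(c) = f(c) a`. -/
lemma aux12 (ψ : C ⊗[k] A →ₗ[k] A ⊗[k] C) (hψ : IsEntwining k ψ)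
    (a : A) (f : C →ₗ[k] A) (c : C) :
    smashMul ψ f (smashIota k C a) c = f c * a := by
  simp only [smashMul, LinearMap.comp_apply]
  rw [aux_iota_eq, LinearMap.lTensor_comp, LinearMap.comp_apply, aux_rid_mul]
  have h2 := LinearMap.congr_fun (aux_counit_map ψ hψ)
    (LinearMap.lTensor C f (Coalgebra.comul c))
  simp only [LinearMap.comp_apply, LinearEquiv.coe_coe] at h2
  rw [h2]
  have h3 : LinearMap.rTensor A (Coalgebra.counit : C →ₗ[k] k)
        (LinearMap.lTensor C f (Coalgebra.comul (R := k) c)) =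
      LinearMap.lTensor k f
        (LinearMap.rTensor C (Coalgebra.counit : C →ₗ[k] k) (Coalgebra.comul c)) := by
    rw [← LinearMap.comp_apply, LinearMap.rTensor_comp_lTensor,
      ← LinearMap.lTensor_comp_rTensor, LinearMap.comp_apply]
  rw [h3, Coalgebra.rTensor_counit_comul]
  simp

-- structural (naturality) lemmas used for associativity
set_option linter.unusedSectionVars false in
lemma auxE2 (f : C →ₗ[k] A) :
    LinearMap.lTensor C (LinearMap.lTensor C f) ∘ₗ (TensorProduct.assoc k C C C).toLinearMap =
      (TensorProduct.assoc k C C A).toLinearMap ∘ₗ LinearMap.lTensor (C ⊗[k] C) f := by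
  ext x y z; simp

set_option linter.unusedSectionVars false in
lemma auxE4 (g : C →ₗ[k] A) :
    (TensorProduct.assoc k C A A).symm.toLinearMap ∘ₗ
        LinearMap.lTensor C (LinearMap.lTensor A g) =
      LinearMap.lTensor (C ⊗[k] A) g ∘ₗ (TensorProduct.assoc k C A C).symm.toLinearMap := by
  ext x y z; simp

set_option linter.unusedSectionVars false in
lemma auxE5 (ψ : C ⊗[k] A →ₗ[k] A ⊗[k] C) (g : C →ₗ[k] A) :
    LinearMap.rTensor A ψ ∘ₗ LinearMap.lTensor (C ⊗[k] A) g =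
      LinearMap.lTensor (A ⊗[k] C) g ∘ₗ LinearMap.rTensor C ψ := by
  rw [LinearMap.rTensor_comp_lTensor, LinearMap.lTensor_comp_rTensor]

set_option linter.unusedSectionVars false in
lemma auxE6 (g : C →ₗ[k] A) :
    (TensorProduct.assoc k A C A).toLinearMap ∘ₗ LinearMap.lTensor (A ⊗[k] C) g =
      LinearMap.lTensor A (LinearMap.lTensor C g) ∘ₗ (TensorProduct.assoc k A C C).toLinearMap := by
  ext x y z; simp

lemma auxE7 (f : C →ₗ[k] A) :
    LinearMap.lTensor (C ⊗[k] C) f ∘ₗ LinearMap.rTensor C (Coalgebra.comul (R := k) (A := C)) =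
      LinearMap.rTensor A Coalgebra.comul ∘ₗ LinearMap.lTensor C f := by
  rw [LinearMap.lTensor_comp_rTensor, LinearMap.rTensor_comp_lTensor]

set_option linter.unusedSectionVars false in
lemma auxE9 (h : C →ₗ[k] A) :
    LinearMap.mul' k A ∘ₗ (LinearMap.lTensor A h ∘ₗ
        (LinearMap.rTensor C (LinearMap.mul' k A) ∘ₗ
          (TensorProduct.assoc k A A C).symm.toLinearMap)) =
      LinearMap.mul' k A ∘ₗ (LinearMap.lTensor A (LinearMap.mul' k A) ∘ₗ
        LinearMap.lTensor A (LinearMap.lTensor A h)) := by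
  ext x y z; simp [mul_assoc]

lemma smash_assoc (ψ : C ⊗[k] A →ₗ[k] A ⊗[k] C) (hψ : IsEntwining k ψ) (f g h : C →ₗ[k] A) :
    smashMul ψ (smashMul ψ f g) h = smashMul ψ f (smashMul ψ g h) := by
  have hmul := hψ.mul_compat
  have hcomul := hψ.comul_compat
  have Emul : ∀ (t : C →ₗ[k] C ⊗[k] (A ⊗[k] A)),
      ψ ∘ₗ (LinearMap.lTensor C (LinearMap.mul' k A) ∘ₗ t) =
        LinearMap.rTensor C (LinearMap.mul' k A) ∘ₗ
          ((TensorProduct.assoc k A A C).symm.toLinearMap ∘ₗ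
            (LinearMap.lTensor A ψ ∘ₗ ((TensorProduct.assoc k A C A).toLinearMap ∘ₗ
              (LinearMap.rTensor A ψ ∘ₗ
                ((TensorProduct.assoc k C A A).symm.toLinearMap ∘ₗ t))))) := by
    intro t
    simp only [← LinearMap.comp_assoc] at hmul ⊢
    rw [hmul]
  have Ecomul : ∀ (t : C →ₗ[k] C ⊗[k] A),
      (TensorProduct.assoc k A C C).toLinearMap ∘ₗ (LinearMap.rTensor C ψ ∘ₗ
        ((TensorProduct.assoc k C A C).symm.toLinearMap ∘ₗ (LinearMap.lTensor C ψ ∘ₗ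
          ((TensorProduct.assoc k C C A).toLinearMap ∘ₗ
            (LinearMap.rTensor A Coalgebra.comul ∘ₗ t))))) =
        LinearMap.lTensor A Coalgebra.comul ∘ₗ (ψ ∘ₗ t) := by
    intro t
    simp only [← LinearMap.comp_assoc] at hcomul ⊢
    rw [hcomul]
  have E2 : ∀ (t : C →ₗ[k] (C ⊗[k] C) ⊗[k] C),
      LinearMap.lTensor C (LinearMap.lTensor C f) ∘ₗ
          ((TensorProduct.assoc k C C C).toLinearMap ∘ₗ t) =
        (TensorProduct.assoc k C C A).toLinearMap ∘ₗ (LinearMap.lTensor (C ⊗[k] C) f ∘ₗ t) := by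
    intro t; simp only [← LinearMap.comp_assoc]; rw [auxE2]
  have E4 : ∀ (t : C →ₗ[k] C ⊗[k] (A ⊗[k] C)),
      (TensorProduct.assoc k C A A).symm.toLinearMap ∘ₗ
          (LinearMap.lTensor C (LinearMap.lTensor A g) ∘ₗ t) =
        LinearMap.lTensor (C ⊗[k] A) g ∘ₗ ((TensorProduct.assoc k C A C).symm.toLinearMap ∘ₗ t) := by
    intro t; simp only [← LinearMap.comp_assoc]; rw [auxE4]
  have E5 : ∀ (t : C →ₗ[k] (C ⊗[k] A) ⊗[k] C),
      LinearMap.rTensor A ψ ∘ₗ (LinearMap.lTensor (C ⊗[k] A) g ∘ₗ t) =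
        LinearMap.lTensor (A ⊗[k] C) g ∘ₗ (LinearMap.rTensor C ψ ∘ₗ t) := by
    intro t; simp only [← LinearMap.comp_assoc]; rw [auxE5]
  have E6 : ∀ (t : C →ₗ[k] (A ⊗[k] C) ⊗[k] C),
      (TensorProduct.assoc k A C A).toLinearMap ∘ₗ (LinearMap.lTensor (A ⊗[k] C) g ∘ₗ t) =
        LinearMap.lTensor A (LinearMap.lTensor C g) ∘ₗ
          ((TensorProduct.assoc k A C C).toLinearMap ∘ₗ t) := by
    intro t; simp only [← LinearMap.comp_assoc]; rw [auxE6]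
  have E7 : ∀ (t : C →ₗ[k] C ⊗[k] C),
      LinearMap.lTensor (C ⊗[k] C) f ∘ₗ
          (LinearMap.rTensor C (Coalgebra.comul (R := k) (A := C)) ∘ₗ t) =
        LinearMap.rTensor A Coalgebra.comul ∘ₗ (LinearMap.lTensor C f ∘ₗ t) := by
    intro t; simp only [← LinearMap.comp_assoc]; rw [auxE7]
  have E9 : ∀ (t : C →ₗ[k] A ⊗[k] (A ⊗[k] C)),
      LinearMap.mul' k A ∘ₗ (LinearMap.lTensor A h ∘ₗ
          (LinearMap.rTensor C (LinearMap.mul' k A) ∘ₗ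
            ((TensorProduct.assoc k A A C).symm.toLinearMap ∘ₗ t))) =
        LinearMap.mul' k A ∘ₗ (LinearMap.lTensor A (LinearMap.mul' k A) ∘ₗ
          (LinearMap.lTensor A (LinearMap.lTensor A h) ∘ₗ t)) := by
    intro t
    have a9 := auxE9 (k := k) (A := A) (C := C) h
    simp only [← LinearMap.comp_assoc] at a9 ⊢
    rw [a9]
  simp only [smashMul, LinearMap.lTensor_comp, LinearMap.comp_assoc]
  rw [← Coalgebra.coassoc, E2, Emul, E4, E5, E6, E7, Ecomul, E9]

lemma aux10 : smashIota k C (1 : A) = smashOne k A C := by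
  ext c
  simp [smashIota, smashOne, Algebra.algebraMap_eq_smul_one]

/-- `#(C,A)` is an associative unital `k`-algebra, `i : A → #(C,A)` is a ring
homomorphism, and `(i(a) # f)(c) = a_ψ f(c^ψ)`, `(f # i(a))(c) = f(c) a`. -/
theorem smash_algebra_structure (ψ : C ⊗[k] A →ₗ[k] A ⊗[k] C) (hψ : IsEntwining k ψ) :
    -- associativity
    (∀ f g h : C →ₗ[k] A, smashMul ψ (smashMul ψ f g) h = smashMul ψ f (smashMul ψ g h)) ∧
    -- unit laws
    (∀ f : C →ₗ[k] A, smashMul ψ (smashOne k A C) f = f) ∧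
    (∀ f : C →ₗ[k] A, smashMul ψ f (smashOne k A C) = f) ∧
    -- k-bilinearity of the multiplication
    (∀ f g g' : C →ₗ[k] A, smashMul ψ f (g + g') = smashMul ψ f g + smashMul ψ f g') ∧
    (∀ f f' g : C →ₗ[k] A, smashMul ψ (f + f') g = smashMul ψ f g + smashMul ψ f' g) ∧
    (∀ (r : k) (f g : C →ₗ[k] A), smashMul ψ (r • f) g = r • smashMul ψ f g) ∧
    (∀ (r : k) (f g : C →ₗ[k] A), smashMul ψ f (r • g) = r • smashMul ψ f g) ∧
    -- i : A → #(C,A) is a ring homomorphism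
    (∀ a b : A, smashIota k C (a * b) = smashMul ψ (smashIota k C a) (smashIota k C b)) ∧
    (∀ a b : A, smashIota k C (a + b) = smashIota k C a + smashIota k C b) ∧
    (smashIota k C (1 : A) = smashOne k A C) ∧
    -- (i(a) # f)(c) = a_ψ f(c^ψ)
    (∀ (a : A) (f : C →ₗ[k] A) (c : C),
      smashMul ψ (smashIota k C a) f c =
        LinearMap.mul' k A (LinearMap.lTensor A f (ψ (c ⊗ₜ[k] a)))) ∧
    -- (f # i(a))(c) = f(c) * a
    (∀ (a : A) (f : C →ₗ[k] A) (c : C), smashMul ψ f (smashIota k C a) c = f c * a) := by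
  refine ⟨smash_assoc ψ hψ, ?_, ?_, ?_, ?_, ?_, ?_, ?_, ?_, aux10, aux11 ψ, aux12 ψ hψ⟩
  · -- left unit
    intro f
    ext c
    rw [← aux10, aux11, hψ.one_compat]
    simp
  · -- right unit
    intro f
    ext c
    rw [← aux10, aux12 ψ hψ]
    simp
  · intro f g g'
    simp only [smashMul, LinearMap.lTensor_add, LinearMap.add_comp, LinearMap.comp_add]
  · intro f f' g
    simp only [smashMul, LinearMap.lTensor_add, LinearMap.add_comp, LinearMap.comp_add]
  · intro r f g
    simp only [smashMul, LinearMap.lTensor_smul, LinearMap.smul_comp, LinearMap.comp_smul]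
  · intro r f g
    simp only [smashMul, LinearMap.lTensor_smul, LinearMap.smul_comp, LinearMap.comp_smul]
  · -- multiplicativity of i
    intro a b
    ext c
    rw [aux11]
    rw [aux_iota_eq b, LinearMap.lTensor_comp, LinearMap.comp_apply, aux_rid_mul,
      hψ.counit_compat]
    simp [smashIota, smul_mul_assoc]
  · intro a b
    ext c
    simp [smashIota, smul_add]

end
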